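/- There exists a constant C > 0 such that for every integer n ≥ 3 and every infinite sequence 𝒢 = (G_1, G_2, …) of nonsplit communication graphs on n nodes, the dynamic radius of 𝒢 is at most C·log log n; that is, there exist a node i ∈ [n] and a time t ≤ C·log log n such that i is a broadcaster in the product graph G_1 ∘ G_2 ∘ ⋯ ∘ G_t. -/

import Mathlib

/-- `prodUpTo G t` is the product graph `G_1 ∘ G_2 ∘ ⋯ ∘ G_t`, where `G_r` is `G (r-1)`
(0-indexed sequence); the empty product (`t = 0`) has exactly the self-loops. -/
def prodUpTo {n : ℕ} (G : ℕ → Fin n → Fin n → Prop) : ℕ → Fin n → Fin n → Prop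
  | 0, i, j => i = j
  | t + 1, i, j => ∃ k, prodUpTo G t i k ∧ G t k j

/-!
Call `S` dominating at time `t` if every node has an in-neighbour from `S` in `G_1 ∘ ⋯ ∘ G_t`;
a broadcaster is a dominating singleton, and all of `[n]` dominates at time `0`. If `S` dominates
at time `t`, then, because `G_{t+1}` is nonsplit, the traces on `S` of the in-neighbourhoods at
time `t + 1` pairwise intersect, and any transversal of these traces dominates at time `t + 1`.
A pairwise intersecting family of subsets of an `m`-set with `N` members has a transversal of size
at most `(m + 1) / 2` (its smallest member, or any set too large to miss a member) and, by the
greedy hitting set argument, one of size at most `(√m + 1)(log₂ N + 1)`. The second bound halves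
`log m` up to an additive `O(log log n)`, so after `log₂ log₂ n + 1` rounds a dominating set of size
`(log n) ^ O(1)` remains, which the first bound shrinks to a single node in `O(log log n)` rounds.
-/

open Finset

namespace Nat

theorem pow_add_mul_le_add_pow (x y q : ℕ) :
    x ^ (q + 1) + (q + 1) * y * x ^ q ≤ (x + y) ^ (q + 1) := by
  induction q with
  | zero => simp
  | succ q ih =>
    calc x ^ (q + 2) + (q + 2) * y * x ^ (q + 1)
        ≤ x ^ (q + 2) + (q + 2) * y * x ^ (q + 1) + (q + 1) * y ^ 2 * x ^ q := Nat.le_add_right _ _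
      _ = (x ^ (q + 1) + (q + 1) * y * x ^ q) * (x + y) := by ring
      _ ≤ (x + y) ^ (q + 1) * (x + y) := Nat.mul_le_mul_right _ ih
      _ = (x + y) ^ (q + 2) := by ring

theorem two_mul_sub_pow_le {a m : ℕ} (ha : 0 < a) (ham : a ≤ m) :
    2 * (m - a) ^ (m / a + 1) ≤ m ^ (m / a + 1) := by
  have hbern := pow_add_mul_le_add_pow (m - a) a (m / a)
  rw [Nat.sub_add_cancel ham] at hbern
  have hq : m - a ≤ (m / a + 1) * a := by
    have := Nat.lt_div_mul_add ha (a := m)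
    rw [add_mul, one_mul]
    omega
  calc 2 * (m - a) ^ (m / a + 1) = (m - a) ^ (m / a + 1) + (m - a) * (m - a) ^ (m / a) := by ring
    _ ≤ (m - a) ^ (m / a + 1) + (m / a + 1) * a * (m - a) ^ (m / a) := by gcongr
    _ ≤ m ^ (m / a + 1) := hbern

/- Greedy budget: `m / a + 1` picks, each hitting at least an `a / m` fraction of the members
still missed, halve their number, and `log₂ N + 1` halvings leave none of `N` members. -/
theorem mul_sub_pow_lt_pow {a m : ℕ} (ha : 0 < a) (ham : a ≤ m) (N : ℕ) :
    N * (m - a) ^ ((m / a + 1) * (Nat.log 2 N + 1)) < m ^ ((m / a + 1) * (Nat.log 2 N + 1)) := by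
  rcases (m - a).eq_zero_or_pos with hma | hma
  · rw [hma, zero_pow (by positivity), mul_zero]
    exact pow_pos (ha.trans_le ham) _
  calc N * (m - a) ^ ((m / a + 1) * (Nat.log 2 N + 1))
      < 2 ^ (Nat.log 2 N + 1) * ((m - a) ^ (m / a + 1)) ^ (Nat.log 2 N + 1) := by
        rw [← pow_mul]
        exact Nat.mul_lt_mul_of_pos_right (Nat.lt_pow_succ_log_self one_lt_two N) (by positivity)
    _ = (2 * (m - a) ^ (m / a + 1)) ^ (Nat.log 2 N + 1) := (mul_pow ..).symm
    _ ≤ (m ^ (m / a + 1)) ^ (Nat.log 2 N + 1) := Nat.pow_le_pow_left (two_mul_sub_pow_le ha ham) _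
    _ = m ^ ((m / a + 1) * (Nat.log 2 N + 1)) := (pow_mul ..).symm

theorem log_sqrt_add_one_mul_le (m : ℕ) {L : ℕ} (hL : L ≠ 0) :
    Nat.log 2 ((Nat.sqrt m + 1) * L) ≤ Nat.log 2 m / 2 + Nat.log 2 L + 1 := by
  have hsqrt : Nat.sqrt m < 2 ^ (Nat.log 2 m / 2 + 1) := by
    rw [Nat.sqrt_lt', ← pow_mul]
    exact (Nat.lt_pow_succ_log_self one_lt_two m).trans_le
      (Nat.pow_le_pow_right two_pos (by omega))
  refine Nat.lt_succ_iff.mp (Nat.log_lt_of_lt_pow (by positivity) ?_)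
  calc (Nat.sqrt m + 1) * L < 2 ^ (Nat.log 2 m / 2 + 1) * 2 ^ (Nat.log 2 L + 1) :=
        Nat.mul_lt_mul_of_le_of_lt hsqrt (Nat.lt_pow_succ_log_self one_lt_two L) (by positivity)
    _ = 2 ^ (Nat.log 2 m / 2 + Nat.log 2 L + 1 + 1) := by rw [← pow_add]; congr 1; omega

end Nat

namespace Finset

variable {α ι : Type*} [DecidableEq α] {S : Finset α} {F : ι → Finset α} {a : ℕ}

theorem exists_mem_card_mul_le_card_mul_card_filter {U : Finset ι} (hS : S.Nonempty)
    (hFS : ∀ j, F j ⊆ S) (hFa : ∀ j, a ≤ #(F j)) :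
    ∃ x ∈ S, #U * a ≤ #S * #{j ∈ U | x ∈ F j} := by
  refine exists_le_of_sum_le hS ?_
  have hSF : ∀ j, S ∩ F j = F j := fun j => inter_eq_right.mpr (hFS j)
  have hcount := sum_card_bipartiteAbove_eq_sum_card_bipartiteBelow (fun j x => x ∈ F j) (s := U)
    (t := S)
  simp only [bipartiteAbove, bipartiteBelow, filter_mem_eq_inter, hSF] at hcount
  calc ∑ _x ∈ S, #U * a = #S * (#U * a) := by rw [sum_const, smul_eq_mul]
    _ ≤ #S * ∑ j ∈ U, #(F j) := by
        gcongr
        simpa using card_nsmul_le_sum U (fun j => #(F j)) a fun j _ => hFa j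
    _ = ∑ x ∈ S, #S * #{j ∈ U | x ∈ F j} := by rw [hcount, mul_sum]

theorem exists_transversal_card_le_of_mul_pow_lt (hFS : ∀ j, F j ⊆ S) (ha : 0 < a)
    (hFa : ∀ j, a ≤ #(F j)) (d : ℕ) (U : Finset ι) (hU : #U * (#S - a) ^ d < #S ^ d) :
    ∃ T : Finset α, #T ≤ d ∧ ∀ j ∈ U, (F j ∩ T).Nonempty := by
  induction d generalizing U with
  | zero => exact ⟨∅, by simp, by simp_all⟩
  | succ d ih =>
    obtain rfl | ⟨j₀, -⟩ := U.eq_empty_or_nonempty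
    · exact ⟨∅, by simp, by simp⟩
    have hS : S.Nonempty := (card_pos.mp (ha.trans_le (hFa j₀))).mono (hFS j₀)
    obtain ⟨x, -, hx⟩ := exists_mem_card_mul_le_card_mul_card_filter (U := U) hS hFS hFa
    set U' := {j ∈ U | x ∉ F j}
    have hU' : #S * #U' ≤ #U * (#S - a) := by
      have hsplit : #S * #{j ∈ U | x ∈ F j} + #S * #U' = #S * #U := by
        rw [← mul_add, card_filter_add_card_filter_not]
      have hsub : #U * (#S - a) = #S * #U - #U * a := by rw [Nat.mul_sub, mul_comm]
      omega
    have hU'd : #U' * (#S - a) ^ d < #S ^ d := by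
      refine Nat.lt_of_mul_lt_mul_left (a := #S) ?_
      calc #S * (#U' * (#S - a) ^ d) = #S * #U' * (#S - a) ^ d := by ring
        _ ≤ #U * (#S - a) * (#S - a) ^ d := by gcongr
        _ = #U * (#S - a) ^ (d + 1) := by ring
        _ < #S ^ (d + 1) := hU
        _ = #S * #S ^ d := by ring
    obtain ⟨T, hT, hhit⟩ := ih U' hU'd
    refine ⟨insert x T, (card_insert_le x T).trans (by omega), fun j hj => ?_⟩
    by_cases hxj : x ∈ F j
    · exact ⟨x, mem_inter.mpr ⟨hxj, mem_insert_self x T⟩⟩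
    · exact (hhit j (mem_filter.mpr ⟨hj, hxj⟩)).mono (inter_subset_inter_left (subset_insert x T))

theorem exists_transversal_card_add_eq (hFS : ∀ j, F j ⊆ S) (ha : 0 < a) (haS : a ≤ #S)
    (hFa : ∀ j, a ≤ #(F j)) : ∃ T : Finset α, (∀ j, (F j ∩ T).Nonempty) ∧ #T + a = #S + 1 := by
  obtain ⟨T, hTS, hT⟩ := exists_subset_card_eq (s := S) (n := #S + 1 - a) (by omega)
  refine ⟨T, fun j => inter_nonempty_of_card_lt_card_add_card (hFS j) hTS ?_, by omega⟩
  have := hFa j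
  omega

variable [Fintype ι] [Nonempty ι]

theorem exists_transversal_two_mul_card_le (hFS : ∀ j, F j ⊆ S)
    (hF : ∀ j j', (F j ∩ F j').Nonempty) :
    ∃ T : Finset α, (∀ j, (F j ∩ T).Nonempty) ∧ 2 * #T ≤ #S + 1 := by
  obtain ⟨j₀, -, hj₀⟩ := exists_min_image univ (fun j => #(F j)) univ_nonempty
  by_cases hsmall : 2 * #(F j₀) ≤ #S + 1
  · exact ⟨F j₀, fun j => hF j j₀, hsmall⟩
  obtain ⟨T, hT, hcard⟩ := exists_transversal_card_add_eq hFS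
    (card_pos.mpr (by simpa using hF j₀ j₀)) (card_le_card (hFS j₀)) fun j => hj₀ j (mem_univ j)
  exact ⟨T, hT, by omega⟩

theorem exists_transversal_card_le_sqrt_mul_log (hFS : ∀ j, F j ⊆ S)
    (hF : ∀ j j', (F j ∩ F j').Nonempty) :
    ∃ T : Finset α, (∀ j, (F j ∩ T).Nonempty) ∧
      #T ≤ (Nat.sqrt #S + 1) * (Nat.log 2 (Fintype.card ι) + 1) := by
  obtain ⟨j₀, -, hj₀⟩ := exists_min_image univ (fun j => #(F j)) univ_nonempty
  by_cases hsmall : #(F j₀) ≤ Nat.sqrt #S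
  · exact ⟨F j₀, fun j => hF j j₀, hsmall.trans (Nat.le_succ _) |>.trans
      (Nat.le_mul_of_pos_right _ (Nat.succ_pos _))⟩
  have ha : 0 < #(F j₀) := by omega
  have hdiv : #S / #(F j₀) ≤ Nat.sqrt #S := Nat.lt_succ_iff.mp <| (Nat.div_lt_iff_lt_mul ha).mpr <|
    (Nat.lt_succ_sqrt _).trans_le (Nat.mul_le_mul_left _ (by omega))
  obtain ⟨T, hT, hhit⟩ := exists_transversal_card_le_of_mul_pow_lt hFS ha
    (fun j => hj₀ j (mem_univ j)) _ univ
    (by simpa using Nat.mul_sub_pow_lt_pow ha (card_le_card (hFS j₀)) (Fintype.card ι))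
  exact ⟨T, fun j => hhit j (mem_univ j), hT.trans (by gcongr)⟩

end Finset

section Broadcast

variable {n : ℕ} {G : ℕ → Fin n → Fin n → Prop} {t : ℕ} {S T : Finset (Fin n)}

def IsNonsplit (H : Fin n → Fin n → Prop) : Prop :=
  ∀ i j, ∃ k, H k i ∧ H k j

open Classical in
noncomputable def inNbhd (G : ℕ → Fin n → Fin n → Prop) (t : ℕ) (j : Fin n) : Finset (Fin n) :=
  {i | prodUpTo G t i j}

theorem mem_inNbhd {i j : Fin n} : i ∈ inNbhd G t j ↔ prodUpTo G t i j := by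
  simp [inNbhd]

def Dominates (G : ℕ → Fin n → Fin n → Prop) (t : ℕ) (S : Finset (Fin n)) : Prop :=
  ∀ j, (S ∩ inNbhd G t j).Nonempty

theorem dominates_univ : Dominates G 0 univ :=
  fun j => ⟨j, mem_inter.mpr ⟨mem_univ j, mem_inNbhd.mpr rfl⟩⟩

theorem dominates_singleton_iff {i : Fin n} : Dominates G t {i} ↔ ∀ j, prodUpTo G t i j := by
  simp [Dominates, Finset.Nonempty, mem_inNbhd]

theorem Dominates.nonempty [NeZero n] (h : Dominates G t S) : S.Nonempty :=
  (h 0).mono inter_subset_left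

theorem Dominates.inter_nonempty_succ (hG : IsNonsplit (G t)) (h : Dominates G t S)
    (j j' : Fin n) : ((S ∩ inNbhd G (t + 1) j) ∩ (S ∩ inNbhd G (t + 1) j')).Nonempty := by
  obtain ⟨k, hkj, hkj'⟩ := hG j j'
  obtain ⟨i, hi⟩ := h k
  simp only [mem_inter, mem_inNbhd] at hi
  exact ⟨i, by simp only [mem_inter, mem_inNbhd]; exact ⟨⟨hi.1, k, hi.2, hkj⟩, hi.1, k, hi.2, hkj'⟩⟩

theorem dominates_succ_of_transversal (hT : ∀ j, ((S ∩ inNbhd G (t + 1) j) ∩ T).Nonempty) :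
    Dominates G (t + 1) T := fun j =>
  (hT j).mono fun i hi => by simp only [mem_inter] at hi ⊢; exact ⟨hi.2, hi.1.2⟩

variable [NeZero n]

theorem Dominates.exists_succ_two_mul_card_le (hG : IsNonsplit (G t)) (h : Dominates G t S) :
    ∃ T, Dominates G (t + 1) T ∧ 2 * #T ≤ #S + 1 :=
  let ⟨T, hT, hcard⟩ :=
    exists_transversal_two_mul_card_le (fun _ => inter_subset_left) (h.inter_nonempty_succ hG)
  ⟨T, dominates_succ_of_transversal hT, hcard⟩

theorem Dominates.exists_succ_card_le_sqrt_mul_log (hG : IsNonsplit (G t)) (h : Dominates G t S) :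
    ∃ T, Dominates G (t + 1) T ∧ #T ≤ (Nat.sqrt #S + 1) * (Nat.log 2 n + 1) := by
  obtain ⟨T, hT, hcard⟩ :=
    exists_transversal_card_le_sqrt_mul_log (fun _ => inter_subset_left) (h.inter_nonempty_succ hG)
  exact ⟨T, dominates_succ_of_transversal hT, by simpa using hcard⟩

theorem Dominates.exists_singleton_of_card_le_two_pow (hG : ∀ t, IsNonsplit (G t)) (r : ℕ)
    (h : Dominates G t S) (hS : #S ≤ 2 ^ r) : ∃ i, Dominates G (t + r) {i} := by
  induction r generalizing t S with
  | zero =>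
    obtain ⟨i, rfl⟩ := card_eq_one.mp (le_antisymm hS (card_pos.mpr h.nonempty))
    exact ⟨i, h⟩
  | succ r ih =>
    obtain ⟨T, hT, hcard⟩ := h.exists_succ_two_mul_card_le (hG t)
    obtain ⟨i, hi⟩ := ih hT (by rw [pow_succ] at hS; omega)
    exact ⟨i, by rwa [add_right_comm, add_assoc] at hi⟩

theorem exists_dominates_log_card_le (hG : ∀ t, IsNonsplit (G t)) (k : ℕ) :
    ∃ S, Dominates G k S ∧
      Nat.log 2 #S ≤ Nat.log 2 n / 2 ^ k + 2 * (Nat.log 2 (Nat.log 2 n + 1) + 2) := by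
  induction k with
  | zero => exact ⟨univ, dominates_univ, by simp⟩
  | succ k ih =>
    obtain ⟨S, hS, hlog⟩ := ih
    obtain ⟨T, hT, hcard⟩ := hS.exists_succ_card_le_sqrt_mul_log (hG k)
    refine ⟨T, hT, ?_⟩
    have hstep :=
      (Nat.log_mono_right hcard).trans (Nat.log_sqrt_add_one_mul_le _ (Nat.succ_ne_zero _))
    have hhalf : Nat.log 2 n / 2 ^ (k + 1) = Nat.log 2 n / 2 ^ k / 2 := by
      rw [pow_succ, Nat.div_div_eq_div_mul]
    omega

theorem exists_broadcaster_le (hG : ∀ t, IsNonsplit (G t)) :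
    ∃ t ≤ 3 * Nat.log 2 (Nat.log 2 n + 1) + 6, ∃ i, ∀ j, prodUpTo G t i j := by
  set l := Nat.log 2 (Nat.log 2 n + 1)
  obtain ⟨S, hS, hlog⟩ := exists_dominates_log_card_le hG (Nat.log 2 (Nat.log 2 n) + 1)
  rw [Nat.div_eq_of_lt (Nat.lt_pow_succ_log_self one_lt_two _), zero_add] at hlog
  have hcard : #S ≤ 2 ^ (2 * l + 5) := (Nat.lt_pow_succ_log_self one_lt_two _).le.trans
    (Nat.pow_le_pow_right two_pos (by omega))
  obtain ⟨i, hi⟩ := hS.exists_singleton_of_card_le_two_pow hG _ hcard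
  have hl : Nat.log 2 (Nat.log 2 n) ≤ l := Nat.log_mono_right (Nat.le_succ _)
  exact ⟨_, by omega, i, dominates_singleton_iff.mp hi⟩

end Broadcast

namespace Real

theorem one_lt_log_three : 1 < log 3 := by
  rw [lt_log_iff_exp_lt (by norm_num)]
  exact exp_one_lt_d9.trans (by norm_num)

theorem natLog_two_le_two_mul_log (x : ℕ) : (Nat.log 2 x : ℝ) ≤ 2 * log x := by
  have hlogb := natLog_le_logb x 2
  rw [Nat.cast_ofNat, logb, le_div_iff₀ (log_pos one_lt_two)] at hlogb
  nlinarith [log_two_gt_d9, log_natCast_nonneg x]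

end Real

theorem natLog_two_natLog_two_add_one_le {n : ℕ} (hn : 3 ≤ n) :
    (Nat.log 2 (Nat.log 2 n + 1) : ℝ) ≤ 2 * Real.log 3 + 2 * Real.log (Real.log n) := by
  have hlogn : 1 ≤ Real.log n :=
    Real.one_lt_log_three.le.trans (Real.log_le_log (by norm_num) (by exact_mod_cast hn))
  have hinner : ((Nat.log 2 n + 1 : ℕ) : ℝ) ≤ 3 * Real.log n := by
    push_cast
    linarith [Real.natLog_two_le_two_mul_log n]
  calc (Nat.log 2 (Nat.log 2 n + 1) : ℝ) ≤ 2 * Real.log ((Nat.log 2 n + 1 : ℕ) : ℝ) :=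
        Real.natLog_two_le_two_mul_log _
    _ ≤ 2 * Real.log (3 * Real.log n) := by gcongr
    _ = 2 * Real.log 3 + 2 * Real.log (Real.log n) := by
        rw [Real.log_mul (by norm_num) (by positivity)]; ring

/-- There exists a constant `C > 0` such that for every `n ≥ 3` and every infinite sequence of
nonsplit communication graphs on `n` nodes, some node `i` is a broadcaster in the product of the
first `t` graphs for some `t ≤ C · log log n`. -/
theorem nonsplit_dynamic_radius_loglog :
    ∃ C : ℝ, 0 < C ∧
      ∀ n : ℕ, 3 ≤ n →
        ∀ G : ℕ → Fin n → Fin n → Prop,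
          (∀ t i, G t i i) →
          (∀ t i j, ∃ k, G t k i ∧ G t k j) →
          ∃ (i : Fin n) (t : ℕ), (t : ℝ) ≤ C * Real.log (Real.log n) ∧
            ∀ j : Fin n, prodUpTo G t i j := by
  set ε := Real.log (Real.log 3)
  have hε : 0 < ε := Real.log_pos Real.one_lt_log_three
  have hA : 0 < 6 * Real.log 3 + 6 := by linarith [Real.one_lt_log_three]
  refine ⟨(6 * Real.log 3 + 6) / ε + 6, by positivity, fun n hn G _ hG => ?_⟩
  have : NeZero n := ⟨by omega⟩
  obtain ⟨t, ht, i, hi⟩ := exists_broadcaster_le hG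
  refine ⟨i, t, ?_, hi⟩
  have hεn : ε ≤ Real.log (Real.log n) :=
    Real.log_le_log (by linarith [Real.one_lt_log_three])
      (Real.log_le_log (by norm_num) (by exact_mod_cast hn))
  have hA' : 6 * Real.log 3 + 6 ≤ (6 * Real.log 3 + 6) / ε * Real.log (Real.log n) := by
    rw [div_mul_eq_mul_div, le_div_iff₀ hε]
    gcongr
  have ht' : (t : ℝ) ≤ 3 * Nat.log 2 (Nat.log 2 n + 1) + 6 := by exact_mod_cast ht
  linarith [natLog_two_natLog_two_add_one_le hn]
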